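/- Let n ≥ 1, ℏ, t ∈ ℝ, b ∈ ℤ^n, and let h : ℝ^n → ℂ be bounded. Let W_t be the diagonal unitary on ℓ²(ℤ^n, ℂ) given by (W_t ψ)(a) = e^{−2π² i t ℏ ‖a‖²} ψ(a) (the free quantum time evolution e^{−itH₀/ℏ} for H₀ = −(ℏ²/2)Δ on the torus, expressed in the Fourier basis), and let Q_{ℏ,b,h} be the Weyl quantization operator. Then W_{−t} ∘ Q_{ℏ,b,h} ∘ W_t = Q_{ℏ,b,h_t}, where h_t(p) := e^{2πi t b·p}·h(p). In particular, conjugation by the free time evolution maps each generator of the resolvent algebra A_ℏ on T^n to another generator, so A_ℏ is closed under free quantum time evolution. -/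
import Mathlib


/-- `ℓ²(ℤⁿ, ℂ)`, the Hilbert space `L²(Tⁿ)` in the Fourier basis. -/
noncomputable abbrev HilSp (n : ℕ) := lp (fun _ : Fin n → ℤ => ℂ) 2

/-- Conjugating the Weyl quantization `Q_{ℏ,b,h}` by the free quantum time evolution
`W_t = e^{−itH₀/ℏ}` (the diagonal unitary `(W_tψ)(a) = e^{−2π²itℏ‖a‖²}ψ(a)`) yields
`W_{−t} ∘ Q_{ℏ,b,h} ∘ W_t = Q_{ℏ,b,h_t}` with `h_t(p) = e^{2πi t b·p}·h(p)`.
The operators are specified through their defining pointwise formulas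
`(Q_{ℏ,b,h}ψ)(a) = h(2πℏ(a − b/2))·ψ(a − b)`. -/
theorem stmt14 (n : ℕ) (hn : 1 ≤ n) (hbar t : ℝ) (b : Fin n → ℤ)
    (h : (Fin n → ℝ) → ℂ) (hbdd : ∃ C : ℝ, ∀ p, ‖h p‖ ≤ C)
    (W : ℝ → HilSp n →L[ℂ] HilSp n)
    (hW : ∀ (s : ℝ) (ψ : HilSp n) (a : Fin n → ℤ),
      (W s ψ) a = Complex.exp (-(((2 * Real.pi ^ 2 * s * hbar * ∑ i, (a i : ℝ) ^ 2 : ℝ)) : ℂ)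
        * Complex.I) * ψ a)
    (Q Q' : HilSp n →L[ℂ] HilSp n)
    (hQ : ∀ (ψ : HilSp n) (a : Fin n → ℤ),
      (Q ψ) a = h (fun i => 2 * Real.pi * hbar * ((a i : ℝ) - (b i : ℝ) / 2)) * ψ (a - b))
    (hQ' : ∀ (ψ : HilSp n) (a : Fin n → ℤ),
      (Q' ψ) a =
        (Complex.exp (((2 * Real.pi * t *
            ∑ i, (b i : ℝ) * (2 * Real.pi * hbar * ((a i : ℝ) - (b i : ℝ) / 2)) : ℝ) : ℂ)
          * Complex.I) *
          h fun i => 2 * Real.pi * hbar * ((a i : ℝ) - (b i : ℝ) / 2)) * ψ (a - b)) :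
    (W (-t)).comp (Q.comp (W t)) = Q' := by
  ext ψ a
  simp only [ContinuousLinearMap.comp_apply]
  rw [hW, hQ, hW, hQ']
  have hr : -(2*Real.pi^2*(-t)*hbar*∑ i, ((a i : ℤ) : ℝ)^2)
      + -(2*Real.pi^2*t*hbar*∑ i, (((a-b) i : ℤ) : ℝ)^2)
      = 2*Real.pi*t*∑ i, ((b i : ℤ) : ℝ)*(2*Real.pi*hbar*(((a i : ℤ) : ℝ)-((b i : ℤ) : ℝ)/2)) := by
    simp only [Finset.mul_sum, ← Finset.sum_neg_distrib, ← Finset.sum_add_distrib]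
    refine Finset.sum_congr rfl fun i _ => ?_
    simp only [Pi.sub_apply]
    push_cast
    ring
  have hE : Complex.exp (-(((2*Real.pi^2*(-t)*hbar*∑ i, ((a i : ℤ) : ℝ)^2 : ℝ)) : ℂ) * Complex.I)
      * Complex.exp (-(((2*Real.pi^2*t*hbar*∑ i, (((a-b) i : ℤ) : ℝ)^2 : ℝ)) : ℂ) * Complex.I)
      = Complex.exp ((((2*Real.pi*t*∑ i, ((b i : ℤ) : ℝ)*(2*Real.pi*hbar*(((a i : ℤ) : ℝ)-((b i : ℤ) : ℝ)/2)) : ℝ)) : ℂ) * Complex.I) := by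
    rw [← Complex.exp_add, ← add_mul]
    congr 2
    exact_mod_cast hr
  rw [← hE]
  ring
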